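/- For every nonnegative integer n, ₃F₂(-n, (n+3)/2, (n+2)/2; 2/3, 4/3; 1) = (4(9n+7)·(-8)ⁿ - 1)/(27(n+1)·4ⁿ). -/

import Mathlib

set_option linter.all false
set_option maxHeartbeats 4000000


open scoped BigOperators

/-- Pochhammer symbol `(a)_n = a(a+1)⋯(a+n-1)`. -/
noncomputable def poch (a : ℝ) (n : ℕ) : ℝ := ∏ i ∈ Finset.range n, (a + i)

lemma poch_succ (a : ℝ) (k : ℕ) : poch a (k+1) = poch a k * (a + k) :=
  Finset.prod_range_succ _ _

lemma poch_zero (a : ℝ) : poch a 0 = 1 := Finset.prod_range_zero _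

lemma poch_neg_nat (n k : ℕ) :
    poch (-(n:ℝ)) k = (-1)^k * (n.choose k) * (k.factorial) := by
  induction k with
  | zero => simp [poch]
  | succ k ih =>
    rw [poch_succ, ih]
    by_cases h : k < n
    · have hr : (n.choose (k+1) : ℝ) * (k+1) = (n.choose k) * ((n:ℝ) - k) := by
        have h2 := congrArg (Nat.cast (R := ℝ)) (Nat.choose_succ_right_eq n k)
        push_cast [Nat.cast_sub h.le] at h2
        linarith [h2]
      have hf : ((k+1).factorial : ℝ) = (k+1) * k.factorial := by
        push_cast [Nat.factorial_succ]; ring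
      rw [hf, pow_succ]
      linear_combination ((-1:ℝ)^k * (k.factorial:ℝ)) * hr
    · push_neg at h
      have h1 : n.choose (k+1) = 0 := Nat.choose_eq_zero_of_lt (by omega)
      rcases eq_or_lt_of_le h with rfl | h2
      · rw [h1]; push_cast; ring
      · have h3 : n.choose k = 0 := Nat.choose_eq_zero_of_lt h2
        rw [h1, h3]; push_cast; ring


lemma fact_cast_succ (m : ℕ) : (((m+1).factorial : ℕ) : ℝ) = ((m:ℝ)+1) * (m.factorial) := by
  rw [Nat.factorial_succ]; push_cast; ring

lemma poch_half (n k : ℕ) :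
    poch (((n:ℝ)+3)/2) k * poch (((n:ℝ)+2)/2) k * ((n+1).factorial) * 4^k
      = (n+2*k+1).factorial := by
  induction k with
  | zero => simp [poch]
  | succ k ih =>
    have e1 : (((n+2*(k+1)+1).factorial : ℕ) : ℝ)
        = ((n:ℝ)+2*k+2) * ((n:ℝ)+2*k+3) * ((n+2*k+1).factorial) := by
      have i1 : n+2*(k+1)+1 = (n+2*k+1)+1+1 := by ring
      rw [i1, fact_cast_succ, fact_cast_succ]; push_cast; ring
    rw [poch_succ, poch_succ, pow_succ, e1]
    linear_combination (((n:ℝ)+2*k+2) * ((n:ℝ)+2*k+3)) * ih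

lemma poch_thirds (k : ℕ) :
    poch (2/3) k * poch (4/3) k * (k.factorial) * 27^k = (3*k+1).factorial := by
  induction k with
  | zero => simp [poch]
  | succ k ih =>
    have e1 : (((3*(k+1)+1).factorial : ℕ) : ℝ)
        = (3*(k:ℝ)+2) * (3*(k:ℝ)+3) * (3*(k:ℝ)+4) * ((3*k+1).factorial) := by
      have i1 : 3*(k+1)+1 = (3*k+1)+1+1+1 := by ring
      rw [i1, fact_cast_succ, fact_cast_succ, fact_cast_succ]; push_cast; ring
    have e2 : (((k+1).factorial : ℕ) : ℝ) = ((k:ℝ)+1) * (k.factorial) := fact_cast_succ k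
    rw [poch_succ, poch_succ, pow_succ, e1, e2]
    linear_combination ((3*(k:ℝ)+2) * (3*(k:ℝ)+3) * (3*(k:ℝ)+4)) * ih

noncomputable def Fm (n k : ℕ) : ℝ :=
  (-27/4)^k * (n.choose k) * (k.factorial) * ((n+2*k+1).factorial) /
    (((n+1).factorial) * ((3*k+1).factorial))

noncomputable def Gc (n k : ℕ) : ℝ :=
  12 * k * (1 - 9*(k:ℝ)^2) * (-27/4)^k * ((n+2).choose k) * (k.factorial) *
    ((n+2*k+1).factorial) / (((n+2).factorial) * ((3*k+1).factorial))

lemma fact_ne (m : ℕ) : ((m.factorial : ℕ) : ℝ) ≠ 0 :=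
  Nat.cast_ne_zero.mpr (Nat.factorial_ne_zero m)

lemma summand_eq (n k : ℕ) :
    poch (-(n:ℝ)) k * poch (((n:ℝ)+3)/2) k * poch (((n:ℝ)+2)/2) k /
        (poch (2/3) k * poch (4/3) k * (Nat.factorial k)) = Fm n k := by
  have h1 := poch_neg_nat n k
  have h2 := poch_half n k
  have h3 := poch_thirds k
  have e3 : poch (2/3) k * poch (4/3) k * (Nat.factorial k : ℝ)
      = ((3*k+1).factorial) / 27^k := by
    rw [eq_div_iff (by positivity : (27:ℝ)^k ≠ 0)]; exact h3
  rw [h1, e3, Fm]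
  rw [div_eq_div_iff (by
      exact div_ne_zero (fact_ne _) (by positivity)) (by
      exact mul_ne_zero (fact_ne _) (fact_ne _))]
  field_simp
  have key : (-(27/4):ℝ)^k * 4^k = (-1)^k * 27^k := by rw [← mul_pow, ← mul_pow]; norm_num
  linear_combination (-((n.choose k : ℝ) * poch (((n:ℝ)+3)/2) k * poch (((n:ℝ)+2)/2) k * ((n+1).factorial : ℝ))) * key + ((n.choose k : ℝ) * (-(27/4):ℝ)^k) * h2

lemma cert_main (m k : ℕ) :
    (4*(((k:ℝ)+m)+3)*(3*((k:ℝ)+m)+5)) * Fm (k+m+2) k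
      + (21*((k:ℝ)+m)^2+101*((k:ℝ)+m)+118) * Fm (k+m+1) k
      - (2*(((k:ℝ)+m)+1)*(3*((k:ℝ)+m)+8)) * Fm (k+m) k
      = Gc (k+m) (k+1) - Gc (k+m) k := by
  have hK := fact_ne k
  have hM := fact_ne m
  have hD := fact_ne (3*k+1)
  have hE := fact_ne (k+m+2*k+1)
  have hA := fact_ne (k+m)
  -- factorial expansions
  have f1 : (((k+m+1).factorial : ℕ) : ℝ) = ((k:ℝ)+m+1) * ((k+m).factorial) := by
    rw [fact_cast_succ]; push_cast; ring
  have f3 : (((k+m+1+1).factorial : ℕ) : ℝ)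
      = ((k:ℝ)+m+2) * (((k:ℝ)+m+1)) * ((k+m).factorial) := by
    rw [fact_cast_succ, f1]; push_cast; ring
  have f4 : (((k+m+2).factorial : ℕ) : ℝ)
      = ((k:ℝ)+m+2) * (((k:ℝ)+m+1)) * ((k+m).factorial) := by
    rw [show k+m+2 = k+m+1+1 from rfl]; exact f3
  have f2 : (((k+m+2+1).factorial : ℕ) : ℝ)
      = ((k:ℝ)+m+3) * ((k:ℝ)+m+2) * (((k:ℝ)+m+1)) * ((k+m).factorial) := by
    rw [fact_cast_succ, f4]; push_cast; ring
  have f6 : (((k+m+1+2*k+1).factorial : ℕ) : ℝ)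
      = (3*(k:ℝ)+m+2) * ((k+m+2*k+1).factorial) := by
    rw [show k+m+1+2*k+1 = (k+m+2*k+1)+1 from by omega, fact_cast_succ]; push_cast; ring
  have f5 : (((k+m+2+2*k+1).factorial : ℕ) : ℝ)
      = (3*(k:ℝ)+m+3) * (3*(k:ℝ)+m+2) * ((k+m+2*k+1).factorial) := by
    rw [show k+m+2+2*k+1 = (k+m+1+2*k+1)+1 from by omega, fact_cast_succ, f6]; push_cast; ring
  have f7 : (((k+m+2*(k+1)+1).factorial : ℕ) : ℝ)
      = (3*(k:ℝ)+m+3) * (3*(k:ℝ)+m+2) * ((k+m+2*k+1).factorial) := by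
    rw [show k+m+2*(k+1)+1 = k+m+2+2*k+1 from by omega]; exact f5
  have f8 : (((3*(k+1)+1).factorial : ℕ) : ℝ)
      = (3*(k:ℝ)+4) * (3*(k:ℝ)+3) * (3*(k:ℝ)+2) * ((3*k+1).factorial) := by
    rw [show 3*(k+1)+1 = 3*k+1+1+1+1 from by omega, fact_cast_succ, fact_cast_succ,
      fact_cast_succ]; push_cast; ring
  have f9 : (((k+1).factorial : ℕ) : ℝ) = ((k:ℝ)+1) * (k.factorial) := fact_cast_succ k
  -- choose values
  have g0 : (((k+m).choose k : ℕ) : ℝ)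
      = ((k+m).factorial) / ((k.factorial) * (m.factorial)) := by
    rw [eq_div_iff (mul_ne_zero hK hM)]
    have h := Nat.choose_mul_factorial_mul_factorial (Nat.le_add_right k m)
    rw [show k+m-k = m from by omega] at h
    have h2 := congrArg (Nat.cast (R := ℝ)) h
    push_cast at h2
    linear_combination h2
  have g1 : (((k+m+1).choose k : ℕ) : ℝ)
      = (((k:ℝ)+m+1) * ((k+m).factorial)) / ((k.factorial) * (((m:ℝ)+1) * (m.factorial))) := by
    rw [eq_div_iff (mul_ne_zero hK (mul_ne_zero (by positivity) hM))]
    have h := Nat.choose_mul_factorial_mul_factorial (show k ≤ k+m+1 from by omega)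
    rw [show k+m+1-k = m+1 from by omega] at h
    have h2 := congrArg (Nat.cast (R := ℝ)) h
    push_cast at h2
    rw [fact_cast_succ m, f1] at h2
    linear_combination h2
  have g2 : (((k+m+2).choose k : ℕ) : ℝ)
      = (((k:ℝ)+m+2) * ((k:ℝ)+m+1) * ((k+m).factorial)) /
        ((k.factorial) * (((m:ℝ)+2) * ((m:ℝ)+1) * (m.factorial))) := by
    rw [eq_div_iff (mul_ne_zero hK (by positivity))]
    have h := Nat.choose_mul_factorial_mul_factorial (show k ≤ k+m+2 from by omega)
    rw [show k+m+2-k = m+2 from by omega] at h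
    have h2 := congrArg (Nat.cast (R := ℝ)) h
    push_cast at h2
    rw [show m+2 = m+1+1 from rfl, fact_cast_succ (m+1), fact_cast_succ m, f4] at h2
    push_cast at h2
    linear_combination h2
  have g3 : (((k+m+2).choose (k+1) : ℕ) : ℝ)
      = (((k:ℝ)+m+2) * ((k:ℝ)+m+1) * ((k+m).factorial)) /
        ((((k:ℝ)+1) * (k.factorial)) * (((m:ℝ)+1) * (m.factorial))) := by
    rw [eq_div_iff (by positivity)]
    have h := Nat.choose_mul_factorial_mul_factorial (show k+1 ≤ k+m+2 from by omega)
    rw [show k+m+2-(k+1) = m+1 from by omega] at h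
    have h2 := congrArg (Nat.cast (R := ℝ)) h
    push_cast at h2
    rw [f9, fact_cast_succ m, f4] at h2
    push_cast at h2
    linear_combination h2
  simp only [Fm, Gc]
  rw [g0, g1, g2, g3, f1, f2, f3, f5, f6, f7, f8, f9, pow_succ]
  push_cast
  field_simp
  ring

lemma cert_e1 (n : ℕ) :
    (4*((n:ℝ)+3)*(3*(n:ℝ)+5)) * Fm (n+2) (n+1)
      + (21*(n:ℝ)^2+101*(n:ℝ)+118) * Fm (n+1) (n+1)
      - (2*((n:ℝ)+1)*(3*(n:ℝ)+8)) * Fm n (n+1)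
      = Gc n (n+1+1) - Gc n (n+1) := by
  have hq1 : (((n+2).choose (n+1) : ℕ) : ℝ) = (n:ℝ)+2 := by
    rw [show n+2 = n+1+1 from rfl, Nat.choose_succ_self_right]; push_cast; ring
  have hq2 : (n+1).choose (n+1) = 1 := Nat.choose_self _
  have hq3 : n.choose (n+1) = 0 := Nat.choose_succ_self n
  have hq4 : (n+2).choose (n+1+1) = 1 := Nat.choose_self _
  have e0 : (((n+2*(n+1)+1).factorial : ℕ) : ℝ) = ((n+2*(n+1)+1).factorial : ℕ) := rfl
  have e1 : (((3*(n+1)+1).factorial : ℕ) : ℝ)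
      = (3*(n:ℝ)+4) * ((n+2*(n+1)+1).factorial) := by
    rw [show 3*(n+1)+1 = (n+2*(n+1)+1)+1 from by omega, fact_cast_succ]; push_cast; ring
  have e2 : (((n+2+2*(n+1)+1).factorial : ℕ) : ℝ)
      = (3*(n:ℝ)+5) * (3*(n:ℝ)+4) * ((n+2*(n+1)+1).factorial) := by
    rw [show n+2+2*(n+1)+1 = (n+2*(n+1)+1)+1+1 from by omega, fact_cast_succ, fact_cast_succ]
    push_cast; ring
  have e3 : (((n+1+2*(n+1)+1).factorial : ℕ) : ℝ)
      = (3*(n:ℝ)+4) * ((n+2*(n+1)+1).factorial) := by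
    rw [show n+1+2*(n+1)+1 = (n+2*(n+1)+1)+1 from by omega, fact_cast_succ]; push_cast; ring
  have e4 : (((n+2*(n+1+1)+1).factorial : ℕ) : ℝ)
      = (3*(n:ℝ)+5) * (3*(n:ℝ)+4) * ((n+2*(n+1)+1).factorial) := by
    rw [show n+2*(n+1+1)+1 = (n+2*(n+1)+1)+1+1 from by omega, fact_cast_succ, fact_cast_succ]
    push_cast; ring
  have e5 : (((3*(n+1+1)+1).factorial : ℕ) : ℝ)
      = (3*(n:ℝ)+7) * (3*(n:ℝ)+6) * (3*(n:ℝ)+5) * (3*(n:ℝ)+4) * ((n+2*(n+1)+1).factorial) := by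
    rw [show 3*(n+1+1)+1 = (n+2*(n+1)+1)+1+1+1+1 from by omega, fact_cast_succ, fact_cast_succ,
      fact_cast_succ, fact_cast_succ]
    push_cast; ring
  have e6 : (((n+2+1).factorial : ℕ) : ℝ) = ((n:ℝ)+3) * ((n:ℝ)+2) * ((n+1).factorial) := by
    rw [show n+2+1 = (n+1)+1+1 from by omega, fact_cast_succ, fact_cast_succ]; push_cast; ring
  have e7 : (((n+1+1).factorial : ℕ) : ℝ) = ((n:ℝ)+2) * ((n+1).factorial) := by
    rw [fact_cast_succ]; push_cast; ring
  have e8 : (((n+2).factorial : ℕ) : ℝ) = ((n:ℝ)+2) * ((n+1).factorial) := by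
    rw [show n+2 = (n+1)+1 from rfl, fact_cast_succ]; push_cast; ring
  simp only [Fm, Gc, hq2, hq3, hq4]
  rw [hq1, e2, e3, e4, e5, e6, e7, pow_succ (-27/4 : ℝ) (n+1)]
  rw [e1]
  push_cast
  field_simp
  ring

lemma cert_e2 (n : ℕ) :
    (4*((n:ℝ)+3)*(3*(n:ℝ)+5)) * Fm (n+2) (n+2)
      + (21*(n:ℝ)^2+101*(n:ℝ)+118) * Fm (n+1) (n+2)
      - (2*((n:ℝ)+1)*(3*(n:ℝ)+8)) * Fm n (n+2)
      = Gc n (n+2+1) - Gc n (n+2) := by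
  have hq1 : (n+2).choose (n+2) = 1 := Nat.choose_self _
  have hq2 : (n+1).choose (n+2) = 0 := Nat.choose_succ_self (n+1)
  have hq3 : n.choose (n+2) = 0 := Nat.choose_eq_zero_of_lt (by omega)
  have hq4 : (n+2).choose (n+2+1) = 0 := Nat.choose_succ_self (n+2)
  have e1 : (((3*(n+2)+1).factorial : ℕ) : ℝ)
      = (3*(n:ℝ)+7) * (3*(n:ℝ)+6) * ((n+2*(n+2)+1).factorial) := by
    rw [show 3*(n+2)+1 = (n+2*(n+2)+1)+1+1 from by omega, fact_cast_succ, fact_cast_succ]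
    push_cast; ring
  have e2 : (((n+2+2*(n+2)+1).factorial : ℕ) : ℝ)
      = (3*(n:ℝ)+7) * (3*(n:ℝ)+6) * ((n+2*(n+2)+1).factorial) := by
    rw [show n+2+2*(n+2)+1 = (n+2*(n+2)+1)+1+1 from by omega, fact_cast_succ, fact_cast_succ]
    push_cast; ring
  have e3 : (((n+2+1).factorial : ℕ) : ℝ) = ((n:ℝ)+3) * ((n+2).factorial) := by
    rw [fact_cast_succ]; push_cast; ring
  simp only [Fm, Gc, hq1, hq2, hq3, hq4]
  rw [e1, e2, e3]
  push_cast
  field_simp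
  ring


lemma cert (n k : ℕ) (hk : k ≤ n + 2) :
    (4*((n:ℝ)+3)*(3*(n:ℝ)+5)) * Fm (n+2) k
      + (21*(n:ℝ)^2+101*(n:ℝ)+118) * Fm (n+1) k
      - (2*((n:ℝ)+1)*(3*(n:ℝ)+8)) * Fm n k
      = Gc n (k+1) - Gc n k := by
  rcases Nat.lt_or_ge n k with h | h
  · rcases Nat.eq_or_lt_of_le h with h1 | h1
    · subst h1; exact cert_e1 n
    · have h2 : k = n + 2 := by omega
      subst h2; exact cert_e2 n
  · obtain ⟨m, rfl⟩ := Nat.exists_eq_add_of_le h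
    have := cert_main m k
    push_cast at this ⊢
    linear_combination this

noncomputable def Ssum (n : ℕ) : ℝ := ∑ k ∈ Finset.range (n+1), Fm n k

lemma Fm_zero {n k : ℕ} (h : n < k) : Fm n k = 0 := by
  simp [Fm, Nat.choose_eq_zero_of_lt h]

lemma sum_ext (n N : ℕ) (h : n + 1 ≤ N) : ∑ k ∈ Finset.range N, Fm n k = Ssum n := by
  rw [Ssum]
  symm
  apply Finset.sum_subset (Finset.range_subset_range.mpr h)
  intro x _ hx
  exact Fm_zero (by simpa using hx)

lemma Ssum_rec (n : ℕ) :
    (4*((n:ℝ)+3)*(3*(n:ℝ)+5)) * Ssum (n+2)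
      + (21*(n:ℝ)^2+101*(n:ℝ)+118) * Ssum (n+1)
      - (2*((n:ℝ)+1)*(3*(n:ℝ)+8)) * Ssum n = 0 := by
  have tele := Finset.sum_range_sub (Gc n) (n+3)
  have h1 : ∀ k ∈ Finset.range (n+3),
      (4*((n:ℝ)+3)*(3*(n:ℝ)+5)) * Fm (n+2) k
        + (21*(n:ℝ)^2+101*(n:ℝ)+118) * Fm (n+1) k
        - (2*((n:ℝ)+1)*(3*(n:ℝ)+8)) * Fm n k
        = Gc n (k+1) - Gc n k := by
    intro k hk
    exact cert n k (by simpa using Nat.lt_succ_iff.mp (Finset.mem_range.mp hk))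
  have h2 := Finset.sum_congr rfl h1
  rw [tele] at h2
  have hG0 : Gc n 0 = 0 := by simp [Gc]
  have hGt : Gc n (n+3) = 0 := by
    simp [Gc, Nat.choose_eq_zero_of_lt (show n+2 < n+3 from by omega)]
  rw [hG0, hGt] at h2
  have e1 : ∑ k ∈ Finset.range (n+3), Fm (n+2) k = Ssum (n+2) := sum_ext _ _ (by omega)
  have e2 : ∑ k ∈ Finset.range (n+3), Fm (n+1) k = Ssum (n+1) := sum_ext _ _ (by omega)
  have e3 : ∑ k ∈ Finset.range (n+3), Fm n k = Ssum n := sum_ext _ _ (by omega)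
  calc (4*((n:ℝ)+3)*(3*(n:ℝ)+5)) * Ssum (n+2)
      + (21*(n:ℝ)^2+101*(n:ℝ)+118) * Ssum (n+1)
      - (2*((n:ℝ)+1)*(3*(n:ℝ)+8)) * Ssum n
      = ∑ k ∈ Finset.range (n+3),
          ((4*((n:ℝ)+3)*(3*(n:ℝ)+5)) * Fm (n+2) k
            + (21*(n:ℝ)^2+101*(n:ℝ)+118) * Fm (n+1) k
            - (2*((n:ℝ)+1)*(3*(n:ℝ)+8)) * Fm n k) := by
        rw [Finset.sum_sub_distrib, Finset.sum_add_distrib, ← Finset.mul_sum,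
          ← Finset.mul_sum, ← Finset.mul_sum, e1, e2, e3]
    _ = 0 - 0 := h2
    _ = 0 := by ring

noncomputable def Cf (n : ℕ) : ℝ :=
  (4 * (9 * (n:ℝ) + 7) * (-8 : ℝ) ^ n - 1) / (27 * ((n:ℝ)+1) * 4 ^ n)

lemma Cf_rec (n : ℕ) :
    (4*((n:ℝ)+3)*(3*(n:ℝ)+5)) * Cf (n+2)
      + (21*(n:ℝ)^2+101*(n:ℝ)+118) * Cf (n+1)
      - (2*((n:ℝ)+1)*(3*(n:ℝ)+8)) * Cf n = 0 := by
  have h4 : (4:ℝ)^n ≠ 0 := by positivity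
  have h1 : ((n:ℝ)+1) ≠ 0 := by positivity
  have h2 : ((n:ℝ)+2) ≠ 0 := by positivity
  have h3 : ((n:ℝ)+3) ≠ 0 := by positivity
  simp only [Cf]
  push_cast
  rw [show ((-8:ℝ))^(n+2) = 64 * (-8)^n from by rw [pow_add]; ring,
    show ((-8:ℝ))^(n+1) = (-8) * (-8)^n from by rw [pow_add]; ring,
    show ((4:ℝ))^(n+2) = 16 * 4^n from by rw [pow_add]; ring,
    show ((4:ℝ))^(n+1) = 4 * 4^n from by rw [pow_add]; ring]
  field_simp
  ring

lemma Ssum_eq_Cf (n : ℕ) : Ssum n = Cf n := by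
  induction n using Nat.strong_induction_on with
  | _ n ih =>
    match n with
    | 0 =>
      rw [Ssum, Cf]
      norm_num [Fm]
    | 1 =>
      rw [Ssum, Cf]
      rw [Finset.sum_range_succ, Finset.sum_range_one]
      norm_num [Fm, Nat.factorial]
    | (n+2) =>
      have i0 := ih n (by omega)
      have i1 := ih (n+1) (by omega)
      have hr := Ssum_rec n
      have hc := Cf_rec n
      rw [i0, i1] at hr
      have hne : (4*((n:ℝ)+3)*(3*(n:ℝ)+5)) ≠ 0 := by positivity
      have := sub_eq_zero.mpr (hr.trans hc.symm)
      apply mul_left_cancel₀ hne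
      linear_combination this

theorem stmt12 (n : ℕ) :
    ∑ k ∈ Finset.range (n+1),
      poch (-(n:ℝ)) k * poch (((n:ℝ)+3)/2) k * poch (((n:ℝ)+2)/2) k /
        (poch (2/3) k * poch (4/3) k * (Nat.factorial k))
      = (4 * (9 * (n:ℝ) + 7) * (-8 : ℝ) ^ n - 1) / (27 * ((n:ℝ)+1) * 4 ^ n) := by
  have h1 : ∑ k ∈ Finset.range (n+1),
      poch (-(n:ℝ)) k * poch (((n:ℝ)+3)/2) k * poch (((n:ℝ)+2)/2) k /
        (poch (2/3) k * poch (4/3) k * (Nat.factorial k)) = Ssum n :=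
    Finset.sum_congr rfl (fun k _ => summand_eq n k)
  rw [h1, Ssum_eq_Cf, Cf]
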